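/- arXiv:2110.01231 — 2 statements merged into one kernel-verified Lean document; each statement's English description precedes it below -/
import Mathlib

section
/- Let K ≥ 1, let p : Fin K → ℝ^K be an affinely independent family of points, and let d : Fin K → ℝ. Suppose there exists y₀ ∈ ℝ^K with y₀ ∉ affineSpan ℝ (Set.range p) and dist(y₀, p i) = d i for all i. Then the trilateration solution set {y ∈ ℝ^K : ∀ i, dist(y, p i) = d i} equals the two-element set {y₀, r(y₀)}, where r is the reflection across affineSpan ℝ (Set.range p); in particular y₀ ≠ r(y₀), so the solution set has exactly two elements. -/
/-!
A solution `y` is as far as `y₀` from every vertex, so the affine span `s` of the vertices lies in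
the perpendicular bisector of `y₀` and `y`. Hence `y -ᵥ y₀` is normal to `s`, and `y` and `y₀` sit
on the same normal line through the foot `q` of `y₀`, at the same distance from `q`. Since `K`
affinely independent points of `ℝ^K` span a hyperplane, that normal line is one-dimensional, so
`y -ᵥ q = ±(y₀ -ᵥ q)`: either `y = y₀` or `y` is the reflection of `y₀`.
-/

open EuclideanGeometry Module AffineSubspace

theorem eq_or_eq_neg_of_norm_eq_of_finrank_eq_one {E : Type*} [NormedAddCommGroup E]
    [NormedSpace ℝ E] (hE : finrank ℝ E = 1) {u w : E} (h : ‖u‖ = ‖w‖) : u = w ∨ u = -w := by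
  obtain ⟨v, hv, hspan⟩ := finrank_eq_one_iff'.mp hE
  obtain ⟨a, rfl⟩ := hspan u
  obtain ⟨b, rfl⟩ := hspan w
  rw [norm_smul, norm_smul, mul_left_inj' (norm_ne_zero_iff.mpr hv), Real.norm_eq_abs,
    Real.norm_eq_abs, abs_eq_abs] at h
  rcases h with rfl | rfl
  · exact Or.inl rfl
  · exact Or.inr (neg_smul b v)

section

variable {V P : Type*} [NormedAddCommGroup V] [InnerProductSpace ℝ V] [MetricSpace P]
  [NormedAddTorsor V P]

theorem AffineIndependent.finrank_orthogonal_vectorSpan_eq_one [FiniteDimensional ℝ V]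
    {ι : Type*} [Fintype ι] [Nonempty ι] {p : ι → P} (hp : AffineIndependent ℝ p)
    (hcard : Fintype.card ι = finrank ℝ V) : finrank ℝ (vectorSpan ℝ (Set.range p))ᗮ = 1 :=
  Submodule.finrank_add_finrank_orthogonal' (hp.finrank_vectorSpan_add_one.trans hcard)

theorem vsub_mem_direction_orthogonal_of_le_perpBisector {s : AffineSubspace ℝ P} {y₀ y : P}
    (h : s ≤ perpBisector y₀ y) : y -ᵥ y₀ ∈ s.directionᗮ := by
  refine (Submodule.mem_orthogonal' _ _).mpr fun u hu => ?_
  have hu' := direction_le h hu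
  rw [direction_perpBisector] at hu'
  exact Submodule.mem_orthogonal_singleton_iff_inner_right.mp hu'

theorem eq_or_eq_reflection_of_le_perpBisector {s : AffineSubspace ℝ P} [Nonempty s]
    [s.direction.HasOrthogonalProjection] (hs : finrank ℝ s.directionᗮ = 1) {y₀ y : P}
    (h : s ≤ perpBisector y₀ y) : y = y₀ ∨ y = reflection s y₀ := by
  set q : P := ↑(orthogonalProjection s y₀)
  have hq : y₀ -ᵥ q ∈ s.directionᗮ := vsub_orthogonalProjection_mem_direction_orthogonal s y₀
  have hperp : y -ᵥ q ∈ s.directionᗮ := by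
    rw [← vsub_add_vsub_cancel y y₀ q]
    exact add_mem (vsub_mem_direction_orthogonal_of_le_perpBisector h) hq
  have hnorm : ‖y -ᵥ q‖ = ‖y₀ -ᵥ q‖ := by
    rw [← dist_eq_norm_vsub, ← dist_eq_norm_vsub, dist_comm, dist_comm y₀]
    exact (mem_perpBisector_iff_dist_eq.mp (h (orthogonalProjection_mem y₀))).symm
  rcases eq_or_eq_neg_of_norm_eq_of_finrank_eq_one hs (u := ⟨y -ᵥ q, hperp⟩) (w := ⟨_, hq⟩)
    hnorm with hsame | hopp
  · exact Or.inl (vsub_left_cancel (congrArg Subtype.val hsame))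
  · right
    rw [reflection_apply', ← neg_vsub_eq_vsub_rev, eq_vadd_iff_vsub_eq]
    exact congrArg Subtype.val hopp

end

/-- If trilateration from K affinely independent points in ℝ^K admits a solution
y₀ outside the affine span of the points, then the solution set is exactly the
two-element set consisting of y₀ and its reflection across that affine span. -/
theorem trilateration_exactly_two (K : ℕ) (hK : 1 ≤ K)
    (p : Fin K → EuclideanSpace ℝ (Fin K)) (hp : AffineIndependent ℝ p)
    (d : Fin K → ℝ)
    [Nonempty (affineSpan ℝ (Set.range p))]
    (y₀ : EuclideanSpace ℝ (Fin K)) (hy₀ : y₀ ∉ affineSpan ℝ (Set.range p))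
    (hd : ∀ i, dist y₀ (p i) = d i) :
    {y : EuclideanSpace ℝ (Fin K) | ∀ i, dist y (p i) = d i}
      = {y₀, EuclideanGeometry.reflection (affineSpan ℝ (Set.range p)) y₀} ∧
    y₀ ≠ EuclideanGeometry.reflection (affineSpan ℝ (Set.range p)) y₀ := by
  set s := affineSpan ℝ (Set.range p)
  have : Nonempty (Fin K) := ⟨⟨0, hK⟩⟩
  have hs : finrank ℝ s.directionᗮ = 1 := by
    rw [direction_affineSpan]
    exact hp.finrank_orthogonal_vectorSpan_eq_one (by simp)
  refine ⟨Set.ext fun y => ⟨fun hy => ?_, ?_⟩, fun h => hy₀ ((reflection_eq_self_iff y₀).mp h.symm)⟩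
  · refine eq_or_eq_reflection_of_le_perpBisector hs (affineSpan_le.mpr ?_)
    rintro _ ⟨i, rfl⟩
    exact mem_perpBisector_iff_dist_eq'.mpr ((hd i).trans (hy i).symm)
  · rintro (rfl | rfl) i
    · exact hd i
    · rw [dist_comm, dist_reflection_eq_of_mem s (mem_affineSpan ℝ (Set.mem_range_self i)),
        dist_comm, hd]
end

section
/- (Centered Gram matrix identity.) Let n ≥ 1, let x : Fin n → ℝ^K with squared Euclidean distance matrix D (D i j = dist(x i, x j)²), let J = 1 − (1/n)·𝟙𝟙ᵀ be the centering matrix, and let c = (1/n)·∑_{k} x k be the centroid of the points. Then for all i, j, the (i,j) entry of the matrix −(1/2)·(J * D * J) equals the inner product ⟪x i − c, x j − c⟫; i.e., −(1/2)·J D J is the Gram matrix of the centered realization. -/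
/-!
Distances do not change under translation, so we may replace the points by
`y i = x i - c`, which sum to zero. Polarization writes the squared distance matrix as
`a 𝟙ᵀ + 𝟙 aᵀ - 2 G` with `a i = ‖y i‖²` and `G` the Gram matrix of `y`. The centering
matrix `J` kills `𝟙` and fixes `G`, whose rows and columns sum to zero, hence `J D J = -2 G`.
-/

open Matrix Finset

namespace Matrix

variable {ι 𝕜 : Type*} [Fintype ι] [DecidableEq ι] [Field 𝕜]

variable (ι 𝕜) in
def centering : Matrix ι ι 𝕜 :=
  1 - (Fintype.card ι : 𝕜)⁻¹ • of fun _ _ => 1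

theorem centering_mul_apply (M : Matrix ι ι 𝕜) (i j : ι) :
    (centering ι 𝕜 * M) i j = M i j - (Fintype.card ι : 𝕜)⁻¹ * ∑ k, M k j := by
  rw [centering, sub_mul, Matrix.one_mul, Matrix.smul_mul]
  simp [Matrix.mul_apply]

theorem mul_centering_apply (M : Matrix ι ι 𝕜) (i j : ι) :
    (M * centering ι 𝕜) i j = M i j - (Fintype.card ι : 𝕜)⁻¹ * ∑ k, M i k := by
  rw [centering, mul_sub, Matrix.mul_one, Matrix.mul_smul]
  simp [Matrix.mul_apply]

theorem centering_mul_of_sum_eq_zero {M : Matrix ι ι 𝕜} (hM : ∀ j, ∑ i, M i j = 0) :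
    centering ι 𝕜 * M = M := by
  ext i j
  simp [centering_mul_apply, hM]

theorem mul_centering_of_sum_eq_zero {M : Matrix ι ι 𝕜} (hM : ∀ i, ∑ j, M i j = 0) :
    M * centering ι 𝕜 = M := by
  ext i j
  simp [mul_centering_apply, hM]

variable [CharZero 𝕜] [Nonempty ι]

theorem centering_mul_replicateRow (a : ι → 𝕜) :
    centering ι 𝕜 * replicateRow ι a = 0 := by
  ext i j
  simp [centering_mul_apply, replicateRow_apply]

theorem replicateCol_mul_centering (a : ι → 𝕜) :
    replicateCol ι a * centering ι 𝕜 = 0 := by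
  ext i j
  simp [mul_centering_apply, replicateCol_apply]

end Matrix

section

variable {ι : Type*} [Fintype ι]

theorem sum_sub_centroid_eq_zero {𝕜 E : Type*} [Field 𝕜] [CharZero 𝕜] [AddCommGroup E]
    [Module 𝕜 E] [Nonempty ι] (x : ι → E) :
    ∑ k, (x k - (Fintype.card ι : 𝕜)⁻¹ • ∑ l, x l) = 0 := by
  rw [sum_sub_distrib, sum_const, card_univ, ← Nat.cast_smul_eq_nsmul 𝕜, smul_smul,
    mul_inv_cancel₀ (by simp), one_smul, sub_self]

theorem sum_gram_apply_left_eq_zero {𝕜 E : Type*} [RCLike 𝕜] [NormedAddCommGroup E]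
    [InnerProductSpace 𝕜 E] {y : ι → E} (hy : ∑ k, y k = 0) (j : ι) :
    ∑ i, gram 𝕜 y i j = 0 := by
  simp [gram, ← sum_inner, hy]

theorem sum_gram_apply_right_eq_zero {𝕜 E : Type*} [RCLike 𝕜] [NormedAddCommGroup E]
    [InnerProductSpace 𝕜 E] {y : ι → E} (hy : ∑ k, y k = 0) (i : ι) :
    ∑ j, gram 𝕜 y i j = 0 := by
  simp [gram, ← inner_sum, hy]

end

section

variable {ι E : Type*}

def squaredDistMatrix [PseudoMetricSpace E] (y : ι → E) : Matrix ι ι ℝ :=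
  of fun i j => dist (y i) (y j) ^ 2

theorem squaredDistMatrix_sub_const [SeminormedAddCommGroup E] (y : ι → E) (c : E) :
    squaredDistMatrix (fun i => y i - c) = squaredDistMatrix y := by
  simp [squaredDistMatrix]

theorem squaredDistMatrix_eq_sub_gram [NormedAddCommGroup E] [InnerProductSpace ℝ E]
    (y : ι → E) :
    squaredDistMatrix y =
      replicateCol ι (fun i => ‖y i‖ ^ 2) + replicateRow ι (fun j => ‖y j‖ ^ 2)
        - (2 : ℝ) • gram ℝ y := by
  ext i j
  simp only [squaredDistMatrix, gram, dist_eq_norm, norm_sub_sq_real, of_apply, smul_of,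
    Matrix.sub_apply, Matrix.add_apply, replicateCol_apply, replicateRow_apply, Pi.smul_apply,
    smul_eq_mul]
  ring

theorem centering_mul_squaredDistMatrix_mul_centering [Fintype ι] [DecidableEq ι] [Nonempty ι]
    [NormedAddCommGroup E] [InnerProductSpace ℝ E] {y : ι → E} (hy : ∑ k, y k = 0) :
    centering ι ℝ * squaredDistMatrix y * centering ι ℝ = (-2 : ℝ) • gram ℝ y := by
  rw [squaredDistMatrix_eq_sub_gram, Matrix.mul_sub, Matrix.mul_add, Matrix.sub_mul,
    Matrix.add_mul, centering_mul_replicateRow, Matrix.mul_assoc, replicateCol_mul_centering,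
    Matrix.mul_smul, Matrix.smul_mul, centering_mul_of_sum_eq_zero (sum_gram_apply_left_eq_zero hy),
    mul_centering_of_sum_eq_zero (sum_gram_apply_right_eq_zero hy)]
  simp [neg_smul]

end

/-- The doubly centered squared EDM, -(1/2)·J D J, is the Gram matrix of the
centered realization: its (i,j) entry is ⟪x i - c, x j - c⟫ where c is the
centroid of the points. -/
theorem centered_gram_identity (n K : ℕ) (hn : 1 ≤ n)
    (x : Fin n → EuclideanSpace ℝ (Fin K))
    (D : Matrix (Fin n) (Fin n) ℝ) (hD : ∀ i j, D i j = dist (x i) (x j) ^ 2)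
    (J : Matrix (Fin n) (Fin n) ℝ)
    (hJ : J = 1 - (n : ℝ)⁻¹ • Matrix.of (fun _ _ : Fin n => (1 : ℝ)))
    (c : EuclideanSpace ℝ (Fin K)) (hc : c = (n : ℝ)⁻¹ • ∑ k, x k) :
    ∀ i j, ((-(1 / 2 : ℝ)) • (J * D * J)) i j = (inner ℝ (x i - c) (x j - c) : ℝ) := by
  have : Nonempty (Fin n) := ⟨⟨0, hn⟩⟩
  have hJ' : J = centering (Fin n) ℝ := by simp [hJ, centering]
  have hD' : D = squaredDistMatrix (fun i => x i - c) := by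
    rw [squaredDistMatrix_sub_const]; ext i j; exact hD i j
  have hsum : ∑ k, (x k - c) = 0 := by
    simpa [hc] using sum_sub_centroid_eq_zero (𝕜 := ℝ) x
  intro i j
  rw [hJ', hD', centering_mul_squaredDistMatrix_mul_centering hsum, smul_smul]
  norm_num [gram]
end
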